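/- Let I = {0,…,n}, J = {0,…,m} ⊂ ℕ, C > 0, and let a = (a_i)_{i∈I}, b = (b_j)_{j∈J} be increasing finite real sequences with C⁻¹ ≤ a_{i+1} − a_i ≤ C for all i and C⁻¹ ≤ b_{j+1} − b_j ≤ C for all j, and assume b_m − b_0 ≤ a_n − a_0. Then there exists a function f : J → I such that (i) |a_i − b_j| ≥ (1/2)|a_i − a_{f(j)}| for all i ∈ I, j ∈ J, and (ii) for every i ∈ I the number of j ∈ J with f(j) = i is at most 4C² + 2. -/

import Mathlib

/-!
Fold the points `b_j` into `[a_0, a_n]`: translate them towards the interval and then reflect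
in its endpoints. Because `b_m - b_0 ≤ a_n - a_0` the folded points `c_j` land in the interval,
no `a_i` is farther from `c_j` than from `b_j`, and the fold is an isometry on each of three
pieces. Let `f j` index an `a_i` nearest to `c_j`; it lies within `C / 2` of `c_j`, so
`|a_i - a_{f j}| ≤ 2 |a_i - c_j| ≤ 2 |a_i - b_j|`. The `j` of one fibre of `f` whose `b_j` lie
in one piece have their `b_j` within `C` of each other, so there are at most `C² + 1` of them,
and `3 (C² + 1) ≤ 4 C² + 2` because `C ≥ 1` as soon as there are two points `b_j`.
-/

open Set
open scoped Finset

theorem Finset.card_le_succ_of_forall_sub_le {s : Finset ℕ} {D : ℕ}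
    (h : ∀ j ∈ s, ∀ j' ∈ s, j' - j ≤ D) : #s ≤ D + 1 := by
  rcases s.eq_empty_or_nonempty with rfl | hs
  · simp
  have hsub : s ⊆ Finset.Icc (s.min' hs) (s.min' hs + D) := fun j hj => by
    have := h _ (s.min'_mem hs) j hj
    have := s.min'_le j hj
    simp only [Finset.mem_Icc]
    omega
  have := Finset.card_le_card hsub
  rw [Nat.card_Icc] at this
  omega

theorem mul_le_sub_of_le_sub_succ {x : ℕ → ℝ} {δ : ℝ} {M : ℕ}
    (hx : ∀ k < M, δ ≤ x (k + 1) - x k) {j j' : ℕ} (hjj' : j ≤ j') (hj' : j' ≤ M) :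
    ((j' - j : ℕ) : ℝ) * δ ≤ x j' - x j := by
  induction j', hjj' using Nat.le_induction with
  | base => simp
  | succ k hjk ih =>
    have := hx k (by omega)
    rw [Nat.succ_sub hjk]
    push_cast
    linarith [ih (by omega)]

theorem mem_Icc_of_le_sub_succ {x : ℕ → ℝ} {δ : ℝ} {M : ℕ} (hδ : 0 ≤ δ)
    (hx : ∀ k < M, δ ≤ x (k + 1) - x k) {j : ℕ} (hj : j ≤ M) : x j ∈ Icc (x 0) (x M) := by
  have h₀ := mul_le_sub_of_le_sub_succ hx (Nat.zero_le j) hj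
  have h₁ := mul_le_sub_of_le_sub_succ hx hj le_rfl
  constructor <;> linarith [mul_nonneg (Nat.cast_nonneg (j - 0)) hδ,
    mul_nonneg (Nat.cast_nonneg (M - j)) hδ]

theorem sub_le_floor_sq_of_abs_sub_le {b : ℕ → ℝ} {C : ℝ} {m j j' : ℕ} (hC : 0 < C)
    (hb : ∀ k < m, C⁻¹ ≤ b (k + 1) - b k) (hj' : j' ≤ m) (hbb : |b j - b j'| ≤ C) :
    j' - j ≤ ⌊C ^ 2⌋₊ := by
  rcases le_total j j' with hjj' | hj'j
  · apply Nat.le_floor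
    have hspan := mul_le_sub_of_le_sub_succ hb hjj' hj'
    have : b j' - b j ≤ C := (le_abs_self _).trans ((abs_sub_comm _ _).trans_le hbb)
    calc ((j' - j : ℕ) : ℝ) = (j' - j : ℕ) * C⁻¹ * C := by field_simp
      _ ≤ C * C := by gcongr; linarith
      _ = C ^ 2 := (sq C).symm
  · simp [Nat.sub_eq_zero_of_le hj'j]

theorem card_le_floor_sq_succ_of_abs_sub_le {b : ℕ → ℝ} {C : ℝ} {m : ℕ} (hC : 0 < C)
    (hb : ∀ k < m, C⁻¹ ≤ b (k + 1) - b k) {s : Finset ℕ} (hs : ∀ j ∈ s, j ≤ m)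
    (hbs : ∀ j ∈ s, ∀ j' ∈ s, |b j - b j'| ≤ C) : #s ≤ ⌊C ^ 2⌋₊ + 1 :=
  Finset.card_le_succ_of_forall_sub_le fun j hj j' hj' =>
    sub_le_floor_sq_of_abs_sub_le hC hb (hs j' hj') (hbs j hj j' hj')

theorem exists_nearest_index (a : ℕ → ℝ) (n : ℕ) (y : ℝ) :
    ∃ i ≤ n, ∀ i' ≤ n, |a i - y| ≤ |a i' - y| := by
  obtain ⟨i, hi, hmin⟩ := Finset.exists_min_image (Finset.range (n + 1)) (fun i => |a i - y|)
    ⟨0, by simp⟩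
  simp only [Finset.mem_range, Nat.lt_succ_iff] at hi hmin
  exact ⟨i, hi, hmin⟩

theorem exists_abs_sub_le_half {a : ℕ → ℝ} {C y : ℝ} {n : ℕ} (hC : 0 ≤ C)
    (ha : ∀ i < n, a (i + 1) - a i ≤ C) (hy : y ∈ Icc (a 0) (a n)) :
    ∃ i ≤ n, |a i - y| ≤ C / 2 := by
  induction n with
  | zero => exact ⟨0, le_rfl, by simp [le_antisymm hy.2 hy.1]; linarith⟩
  | succ n ih =>
    by_cases hyn : y ≤ a n
    · obtain ⟨i, hi, hiy⟩ := ih (fun i hi => ha i (by omega)) ⟨hy.1, hyn⟩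
      exact ⟨i, by omega, hiy⟩
    · have hgap := ha n (by omega)
      rcases le_total (y - a n) (C / 2) with h | h
      · exact ⟨n, by omega, by rw [abs_sub_comm, abs_of_nonneg (by linarith)]; exact h⟩
      · exact ⟨n + 1, le_rfl, by rw [abs_of_nonneg (by linarith [hy.2])]; linarith⟩

theorem exists_matching_of_piecewise_isometry {n m k : ℕ} {C : ℝ} (hC : 0 < C)
    {a b c : ℕ → ℝ} (σ : ℕ → Fin k)
    (ha : ∀ i < n, a (i + 1) - a i ≤ C) (hb : ∀ j < m, C⁻¹ ≤ b (j + 1) - b j)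
    (hc_mem : ∀ j ≤ m, c j ∈ Icc (a 0) (a n))
    (hc_le : ∀ i ≤ n, ∀ j ≤ m, |a i - c j| ≤ |a i - b j|)
    (hc_isom : ∀ j ≤ m, ∀ j' ≤ m, σ j = σ j' → |c j - c j'| = |b j - b j'|) :
    ∃ f : ℕ → ℕ, (∀ j ≤ m, f j ≤ n) ∧
      (∀ i ≤ n, ∀ j ≤ m, (1 / 2) * |a i - a (f j)| ≤ |a i - b j|) ∧
      (∀ i ≤ n, (({j | j ≤ m ∧ f j = i}).ncard : ℝ) ≤ k * (C ^ 2 + 1)) := by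
  choose f hf_le hf_min using fun j => exists_nearest_index a n (c j)
  have hf_near : ∀ j ≤ m, |a (f j) - c j| ≤ C / 2 := fun j hj => by
    obtain ⟨i, hi, hiy⟩ := exists_abs_sub_le_half hC.le ha (hc_mem j hj)
    exact (hf_min j i hi).trans hiy
  refine ⟨f, fun j _ => hf_le j, fun i hi j hj => ?_, fun i hi => ?_⟩
  · calc (1 / 2) * |a i - a (f j)| ≤ (1 / 2) * (|a i - c j| + |a (f j) - c j|) := by
          rw [abs_sub_comm (a (f j))]; gcongr; exact abs_sub_le _ _ _
      _ ≤ |a i - c j| := by linarith [hf_min j i hi]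
      _ ≤ |a i - b j| := hc_le i hi j hj
  · classical
    have hfibre : {j | j ≤ m ∧ f j = i} = ↑({j ∈ Finset.Iic m | f j = i}) := by ext; simp
    have hpiece : ∀ r ∈ (Finset.univ : Finset (Fin k)),
        #{j ∈ {j ∈ Finset.Iic m | f j = i} | σ j = r} ≤ ⌊C ^ 2⌋₊ + 1 := by
      refine fun r _ => card_le_floor_sq_succ_of_abs_sub_le hC hb (by simp_all) fun j hj j' hj' => ?_
      simp only [Finset.mem_filter, Finset.mem_Iic] at hj hj'
      rw [← hc_isom j hj.1.1 j' hj'.1.1 (hj.2.trans hj'.2.symm)]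
      have hj_near := hj.1.2 ▸ hf_near j hj.1.1
      have hj'_near := hj'.1.2 ▸ hf_near j' hj'.1.1
      calc |c j - c j'| ≤ |c j - a i| + |a i - c j'| := abs_sub_le _ _ _
      _ ≤ C := by rw [abs_sub_comm]; linarith
    have hcard := Finset.card_le_mul_card_image_of_maps_to (fun j _ => Finset.mem_univ (σ j)) _ hpiece
    rw [Finset.card_univ, Fintype.card_fin] at hcard
    rw [hfibre, Set.ncard_coe_finset]
    calc (#{j ∈ Finset.Iic m | f j = i} : ℝ) ≤ (⌊C ^ 2⌋₊ + 1) * k := by exact_mod_cast hcard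
      _ ≤ k * (C ^ 2 + 1) := by
        rw [mul_comm]
        gcongr
        exact Nat.floor_le (sq_nonneg C)

noncomputable def reflectIcc (p q y : ℝ) : ℝ :=
  if y < p then 2 * p - y else if q < y then 2 * q - y else y

noncomputable def reflectIccPiece (p q y : ℝ) : Fin 3 :=
  if y < p then 0 else if q < y then 2 else 1

theorem abs_sub_reflectIcc_le {p q x : ℝ} (hx : x ∈ Icc p q) (y : ℝ) :
    |x - reflectIcc p q y| ≤ |x - y| := by
  obtain ⟨hpx, hxq⟩ := hx
  unfold reflectIcc
  split_ifs with hyp hqy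
  · rw [abs_of_nonneg (by linarith : 0 ≤ x - y), abs_le]; constructor <;> linarith
  · rw [abs_of_nonpos (by linarith : x - y ≤ 0), abs_le]; constructor <;> linarith
  · rfl

theorem reflectIcc_mem_Icc {p q y : ℝ} (hy : y ∈ Icc (2 * p - q) (2 * q - p)) :
    reflectIcc p q y ∈ Icc p q := by
  obtain ⟨hy₁, hy₂⟩ := hy
  unfold reflectIcc
  split_ifs with hyp hqy <;> constructor <;> linarith

theorem abs_reflectIcc_sub_reflectIcc {p q y y' : ℝ}
    (h : reflectIccPiece p q y = reflectIccPiece p q y') :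
    |reflectIcc p q y - reflectIcc p q y'| = |y - y'| := by
  unfold reflectIcc
  unfold reflectIccPiece at h
  split_ifs at h ⊢ <;> first | rfl | exact absurd h (by decide) | (rw [abs_sub_comm y]; congr 1; ring)

theorem exists_add_mem_Icc_forall_abs_sub_le {p q u v : ℝ} (huv : v - u ≤ q - p) :
    ∃ t : ℝ, ∀ y ∈ Icc u v, y + t ∈ Icc (2 * p - q) (2 * q - p) ∧
      ∀ x ∈ Icc p q, |x - (y + t)| ≤ |x - y| := by
  by_cases hvp : v < p
  · refine ⟨p - v, fun y ⟨huy, hyv⟩ => ⟨⟨by linarith, by linarith⟩, fun x ⟨hpx, _⟩ => ?_⟩⟩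
    rw [abs_of_nonneg (by linarith), abs_of_nonneg (by linarith)]
    linarith
  by_cases hqu : q < u
  · refine ⟨q - u, fun y ⟨huy, hyv⟩ => ⟨⟨by linarith, by linarith⟩, fun x ⟨_, hxq⟩ => ?_⟩⟩
    rw [abs_of_nonpos (by linarith), abs_of_nonpos (by linarith)]
    linarith
  refine ⟨0, fun y hy => ⟨?_, fun x _ => by rw [add_zero]⟩⟩
  obtain ⟨huy, hyv⟩ := hy
  constructor <;> linarith

theorem exists_piecewise_isometry_into_Icc {p q u v : ℝ} (huv : v - u ≤ q - p) :
    ∃ (g : ℝ → ℝ) (σ : ℝ → Fin 3), (∀ y ∈ Icc u v, g y ∈ Icc p q) ∧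
      (∀ x ∈ Icc p q, ∀ y ∈ Icc u v, |x - g y| ≤ |x - y|) ∧
      (∀ y y', σ y = σ y' → |g y - g y'| = |y - y'|) := by
  obtain ⟨t, ht⟩ := exists_add_mem_Icc_forall_abs_sub_le huv
  refine ⟨fun y => reflectIcc p q (y + t), fun y => reflectIccPiece p q (y + t),
    fun y hy => reflectIcc_mem_Icc (ht y hy).1,
    fun x hx y hy => (abs_sub_reflectIcc_le hx _).trans ((ht y hy).2 x hx),
    fun y y' h => ?_⟩
  rw [abs_reflectIcc_sub_reflectIcc h]
  ring_nf

theorem statement17 (n m : ℕ) (C : ℝ) (hC : 0 < C) (a b : ℕ → ℝ)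
    (ha : ∀ i < n, C⁻¹ ≤ a (i + 1) - a i ∧ a (i + 1) - a i ≤ C)
    (hb : ∀ j < m, C⁻¹ ≤ b (j + 1) - b j ∧ b (j + 1) - b j ≤ C)
    (hw : b m - b 0 ≤ a n - a 0) :
    ∃ f : ℕ → ℕ, (∀ j ≤ m, f j ≤ n) ∧
      (∀ i ≤ n, ∀ j ≤ m, (1 / 2) * |a i - a (f j)| ≤ |a i - b j|) ∧
      (∀ i ≤ n, (({j | j ≤ m ∧ f j = i}).ncard : ℝ) ≤ 4 * C ^ 2 + 2) := by
  have ha_mem : ∀ i ≤ n, a i ∈ Icc (a 0) (a n) :=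
    fun i => mem_Icc_of_le_sub_succ (inv_nonneg.2 hC.le) fun k hk => (ha k hk).1
  have hb_mem : ∀ j ≤ m, b j ∈ Icc (b 0) (b m) :=
    fun j => mem_Icc_of_le_sub_succ (inv_nonneg.2 hC.le) fun k hk => (hb k hk).1
  obtain ⟨g, σ, hg_mem, hg_le, hg_isom⟩ := exists_piecewise_isometry_into_Icc hw
  obtain ⟨f, hf_le, hf_dist, hf_card⟩ := exists_matching_of_piecewise_isometry hC (σ ∘ b)
    (c := g ∘ b) (fun i hi => (ha i hi).2) (fun j hj => (hb j hj).1)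
    (fun j hj => hg_mem _ (hb_mem j hj)) (fun i hi j hj => hg_le _ (ha_mem i hi) _ (hb_mem j hj))
    (fun j _ j' _ h => hg_isom _ _ h)
  refine ⟨f, hf_le, hf_dist, fun i hi => ?_⟩
  rcases Nat.eq_zero_or_pos m with rfl | hm
  · have : {j | j ≤ 0 ∧ f j = i}.ncard ≤ 1 :=
      (Set.ncard_le_ncard (t := {0}) fun j hj => Nat.le_zero.1 hj.1).trans_eq (ncard_singleton 0)
    calc ({j | j ≤ 0 ∧ f j = i}.ncard : ℝ) ≤ 1 := by exact_mod_cast this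
      _ ≤ 4 * C ^ 2 + 2 := by linarith [sq_nonneg C]
  · have hC1 : 1 ≤ C ^ 2 := by
      have := (hb 0 hm).1.trans (hb 0 hm).2
      rwa [inv_le_iff_one_le_mul₀ hC, ← sq] at this
    calc ({j | j ≤ m ∧ f j = i}.ncard : ℝ) ≤ (3 : ℕ) * (C ^ 2 + 1) := hf_card i hi
      _ ≤ 4 * C ^ 2 + 2 := by push_cast; linarith
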